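/- arXiv:1612.09144 — 4 statements merged into one kernel-verified Lean document; each statement's English description precedes it below -/
import Mathlib

section
/- Let n ≥ 1, let V₀, …, V_{n−1} ∈ ℝ² be the vertices of a closed polygonal chain (indices taken modulo n), write Vᵢ = (xᵢ, yᵢ), and let R : ℝ² → ℝ² be the clockwise quarter rotation R(x, y) = (y, −x). Then for every affine function v : ℝ² → ℝ with gradient g, the vertex-based boundary formula is exact: ∑_{i=0}^{n−1} ((v(Vᵢ) + v(V_{i+1}))/2) • R(V_{i+1} − Vᵢ) = A • g, where A = (1/2) ∑_{i=0}^{n−1} (xᵢ y_{i+1} − x_{i+1} yᵢ) is the shoelace signed area. (For a counterclockwise simple polygon P with these vertices, A = |P| and R(V_{i+1} − Vᵢ) = |Eᵢ| n_{P,i}, so this says the formula ∑ᵢ ((v(Vᵢ)+v(V_{i+1}))/2)|Eᵢ| n_{P,i} for ∫_P ∇v dV is exact on linear polynomials.) -/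
/-- exactness of the vertex-based boundary formula for the averaged gradient.
Vertices `V 0, …, V (n-1) : ℝ × ℝ` of a closed polygonal chain (indices mod `n`),
`R (x, y) = (y, -x)` the clockwise quarter rotation, `v` affine with gradient `g`.
Then `∑ i, ((v (V i) + v (V (i+1)))/2) • R (V (i+1) - V i) = A • g` with `A` the
shoelace signed area. -/
theorem vem_shoelace_gradient_exact
    (n : ℕ) [NeZero n] (V : Fin n → ℝ × ℝ)
    (R : ℝ × ℝ → ℝ × ℝ) (hR : ∀ p : ℝ × ℝ, R p = (p.2, -p.1))
    (g : ℝ × ℝ) (c : ℝ) (v : ℝ × ℝ → ℝ)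
    (hv : ∀ p : ℝ × ℝ, v p = g.1 * p.1 + g.2 * p.2 + c) :
    ∑ i : Fin n, ((v (V i) + v (V (i + 1))) / 2) • R (V (i + 1) - V i)
      = ((1 / 2) * ∑ i : Fin n,
          ((V i).1 * (V (i + 1)).2 - (V (i + 1)).1 * (V i).2)) • g := by
  have shift : ∀ F : ℝ × ℝ → ℝ,
      ∑ i : Fin n, F (V (i + 1)) = ∑ i : Fin n, F (V i) :=
    fun F => Fintype.sum_equiv (Equiv.addRight 1) _ _ (fun i => rfl)
  set H1 : ℝ × ℝ → ℝ := fun p => (g.1 * p.1 * p.2 + g.2 * p.2 ^ 2 + 2 * c * p.2) / 2 with hH1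
  set H2 : ℝ × ℝ → ℝ := fun p => -(g.1 * p.1 ^ 2 + g.2 * p.1 * p.2 + 2 * c * p.1) / 2 with hH2
  refine Prod.ext ?_ ?_
  · rw [Prod.fst_sum]
    have key : ∀ i : Fin n,
        ((((v (V i) + v (V (i + 1))) / 2) • R (V (i + 1) - V i)).1 : ℝ)
          = (1 / 2 * ((V i).1 * (V (i + 1)).2 - (V (i + 1)).1 * (V i).2)) * g.1
            + (H1 (V (i + 1)) - H1 (V i)) := by
      intro i
      simp only [hR, hv, hH1, smul_eq_mul, Prod.smul_fst, Prod.fst, Prod.snd_sub,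
        Prod.fst_sub]
      ring
    rw [Finset.sum_congr rfl (fun i _ => key i), Finset.sum_add_distrib,
      Finset.sum_sub_distrib, shift, sub_self, add_zero]
    simp only [Prod.smul_fst, smul_eq_mul, Finset.mul_sum, Finset.sum_mul]
  · rw [Prod.snd_sum]
    have key : ∀ i : Fin n,
        ((((v (V i) + v (V (i + 1))) / 2) • R (V (i + 1) - V i)).2 : ℝ)
          = (1 / 2 * ((V i).1 * (V (i + 1)).2 - (V (i + 1)).1 * (V i).2)) * g.2
            + (H2 (V (i + 1)) - H2 (V i)) := by
      intro i
      simp only [hR, hv, hH2, smul_eq_mul, Prod.smul_snd, Prod.snd, Prod.snd_sub,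
        Prod.fst_sub]
      ring
    rw [Finset.sum_congr rfl (fun i _ => key i), Finset.sum_add_distrib,
      Finset.sum_sub_distrib, shift, sub_self, add_zero]
    simp only [Prod.smul_snd, smul_eq_mul, Finset.mul_sum, Finset.sum_mul]
end

section
/- Let P ⊆ ℝ² be measurable with 0 < |P| < ∞, let V be a real vector space of functions ℝ² → ℝ, each differentiable on P with integrable gradient, containing all affine functions. Let Π : V → V be a linear map such that (i) for every v ∈ V the image Πv is an affine function whose (constant) gradient equals avg∇v := (1/|P|)∫_P ∇v dV, and (ii) Πq = q for every affine q ∈ V. Let S : V × V → ℝ be any bilinear form. Then the virtual element local bilinear form A_{h,P}(v, w) := ∫_P ⟪∇(Πv), ∇(Πw)⟫ dV + S(v − Πv, w − Πw) satisfies the polynomial consistency property: A_{h,P}(v, q) = ∫_P ⟪∇v, ∇q⟫ dV for every v ∈ V and every affine function q. In particular the stabilization term does not upset consistency, because (I − Π)q = 0 for affine q. -/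
open MeasureTheory RealInnerProductSpace

/-!
On `P` the projections `Π v` and `q = Π q` are affine, so their gradients are the constants
`⨍_P ∇v` and `∇q`, and the stabilization term is `S (v - Π v) 0 = 0`. Hence the consistency
identity reduces to `∫_P ⟪⨍_P ∇v, ∇q⟫ = ∫_P ⟪∇v, ∇q⟫`, i.e. integrating the average of `∇v`
over `P` gives the same result as integrating `∇v` itself.
-/

section Gradient

variable {F : Type*} [NormedAddCommGroup F] [InnerProductSpace ℝ F] [CompleteSpace F]

theorem hasGradientAt_inner_add_const (g : F) (c : ℝ) (x : F) :
    HasGradientAt (fun p => ⟪g, p⟫ + c) g x := by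
  rw [hasGradientAt_iff_hasFDerivAt]
  exact (innerSL ℝ g).hasFDerivAt.add_const c

theorem HasGradientAt.eq_of_eq_inner_add_const {f : F → ℝ} {f' g x : F} {c : ℝ}
    (hf : HasGradientAt f f' x) (hfg : f = fun p => ⟪g, p⟫ + c) : f' = g := by
  subst hfg
  exact hf.unique (hasGradientAt_inner_add_const g c x)

end Gradient

theorem integral_inner_average_left {α E : Type*} [MeasurableSpace α] {μ : Measure α}
    [IsFiniteMeasure μ] [NormedAddCommGroup E] [InnerProductSpace ℝ E] [CompleteSpace E]
    {f : α → E} (hf : Integrable f μ) (g : E) :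
    ∫ _, ⟪⨍ a, f a ∂μ, g⟫ ∂μ = ∫ x, ⟪f x, g⟫ ∂μ :=
  calc ∫ _, ⟪⨍ a, f a ∂μ, g⟫ ∂μ = ⟪∫ _, ⨍ a, f a ∂μ ∂μ, g⟫ := by
        rw [integral_const, integral_const, real_inner_smul_left, smul_eq_mul]
    _ = ⟪∫ x, f x ∂μ, g⟫ := by rw [integral_average]
    _ = ∫ x, ⟪f x, g⟫ ∂μ := by
        simp_rw [real_inner_comm g]
        exact (integral_inner hf g).symm

theorem vem_stabilized_form_consistency_general
    (P : Set (EuclideanSpace ℝ (Fin 2))) (hP : MeasurableSet P)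
    (hfin : volume P < ⊤)
    (V : Submodule ℝ (EuclideanSpace ℝ (Fin 2) → ℝ))
    (G : (EuclideanSpace ℝ (Fin 2) → ℝ) →
      EuclideanSpace ℝ (Fin 2) → EuclideanSpace ℝ (Fin 2))
    (hGrad : ∀ f ∈ V, ∀ x ∈ P, HasGradientAt f (G f x) x)
    (hGint : ∀ f ∈ V, IntegrableOn (G f) P)
    (Pi : V →ₗ[ℝ] V)
    (hPiAff : ∀ v : V, ∃ c : ℝ, (Pi v : EuclideanSpace ℝ (Fin 2) → ℝ)
      = fun p => ⟪(volume P).toReal⁻¹ • ∫ x in P, G (v : EuclideanSpace ℝ (Fin 2) → ℝ) x, p⟫ + c)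
    (hPiId : ∀ q : V, (∃ (g : EuclideanSpace ℝ (Fin 2)) (c : ℝ),
      (q : EuclideanSpace ℝ (Fin 2) → ℝ) = fun p => ⟪g, p⟫ + c) → Pi q = q)
    (S : V →ₗ[ℝ] V →ₗ[ℝ] ℝ) :
    ∀ (v : V) (g : EuclideanSpace ℝ (Fin 2)) (c : ℝ)
      (q : V), (q : EuclideanSpace ℝ (Fin 2) → ℝ) = (fun p => ⟪g, p⟫ + c) →
      (∫ x in P, ⟪G (Pi v : EuclideanSpace ℝ (Fin 2) → ℝ) x,
            G (Pi q : EuclideanSpace ℝ (Fin 2) → ℝ) x⟫)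
          + S (v - Pi v) (q - Pi q)
        = ∫ x in P, ⟪G (v : EuclideanSpace ℝ (Fin 2) → ℝ) x, g⟫ := by
  intro v g c q hq
  have : IsFiniteMeasure (volume.restrict P) := isFiniteMeasure_restrict.mpr hfin.ne
  have hPiq : Pi q = q := hPiId q ⟨g, c, hq⟩
  obtain ⟨c', hPiv⟩ := hPiAff v
  rw [← measureReal_def, ← setAverage_eq] at hPiv
  have hG : ∀ x ∈ P, ⟪G (Pi v : EuclideanSpace ℝ (Fin 2) → ℝ) x, G q x⟫
      = ⟪⨍ y in P, G (v : EuclideanSpace ℝ (Fin 2) → ℝ) y, g⟫ := fun x hx => by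
    rw [(hGrad _ (Pi v).2 x hx).eq_of_eq_inner_add_const hPiv,
      (hGrad _ q.2 x hx).eq_of_eq_inner_add_const hq]
  rw [hPiq, sub_self, map_zero, add_zero, setIntegral_congr_fun hP hG]
  exact integral_inner_average_left (hGint _ v.2) g

/-- polynomial consistency of the stabilized VEM local bilinear form.
`V` is a space of functions `ℝ² → ℝ` (containing all affine functions), each with
gradient `G f x` at every `x ∈ P` and integrable gradient; `Π` is a linear map on `V`
such that `Π v` is affine with constant gradient equal to the averaged gradient of `v`,
and `Π q = q` for affine `q ∈ V`; `S` is any bilinear form on `V`.  Then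
`∫_P ⟪∇(Πv), ∇(Πq)⟫ + S(v − Πv, q − Πq) = ∫_P ⟪∇v, ∇q⟫` for every `v ∈ V` and every
affine `q`. -/
theorem vem_stabilized_form_consistency
    (P : Set (EuclideanSpace ℝ (Fin 2))) (hP : MeasurableSet P)
    (hpos : 0 < volume P) (hfin : volume P < ⊤)
    (V : Submodule ℝ (EuclideanSpace ℝ (Fin 2) → ℝ))
    (G : (EuclideanSpace ℝ (Fin 2) → ℝ) →
      EuclideanSpace ℝ (Fin 2) → EuclideanSpace ℝ (Fin 2))
    (hGrad : ∀ f ∈ V, ∀ x ∈ P, HasGradientAt f (G f x) x)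
    (hGint : ∀ f ∈ V, IntegrableOn (G f) P)
    (hAff : ∀ (g : EuclideanSpace ℝ (Fin 2)) (c : ℝ),
      (fun p => ⟪g, p⟫ + c) ∈ V)
    (Pi : V →ₗ[ℝ] V)
    (hPiAff : ∀ v : V, ∃ c : ℝ, (Pi v : EuclideanSpace ℝ (Fin 2) → ℝ)
      = fun p => ⟪(volume P).toReal⁻¹ • ∫ x in P, G (v : EuclideanSpace ℝ (Fin 2) → ℝ) x, p⟫ + c)
    (hPiId : ∀ q : V, (∃ (g : EuclideanSpace ℝ (Fin 2)) (c : ℝ),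
      (q : EuclideanSpace ℝ (Fin 2) → ℝ) = fun p => ⟪g, p⟫ + c) → Pi q = q)
    (S : V →ₗ[ℝ] V →ₗ[ℝ] ℝ) :
    ∀ (v : V) (g : EuclideanSpace ℝ (Fin 2)) (c : ℝ)
      (q : V), (q : EuclideanSpace ℝ (Fin 2) → ℝ) = (fun p => ⟪g, p⟫ + c) →
      (∫ x in P, ⟪G (Pi v : EuclideanSpace ℝ (Fin 2) → ℝ) x,
            G (Pi q : EuclideanSpace ℝ (Fin 2) → ℝ) x⟫)
          + S (v - Pi v) (q - Pi q)
        = ∫ x in P, ⟪G (v : EuclideanSpace ℝ (Fin 2) → ℝ) x, g⟫ :=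
  vem_stabilized_form_consistency_general P hP hfin V G hGrad hGint Pi hPiAff hPiId S
end

section
/- Unisolvence of the vertex degrees of freedom for the low-order virtual element space: let U ⊆ ℝ² be a bounded open set whose frontier is the union of finitely many closed segments [Vᵢ, V_{i+1}] (indices modulo n) joining its vertices V₀, …, V_{n−1}. Suppose v : ℝ² → ℝ is continuous on the closure of U, harmonic on U, agrees on each boundary segment [Vᵢ, V_{i+1}] with some affine function, and satisfies v(Vᵢ) = 0 for every vertex Vᵢ. Then v = 0 on the closure of U. -/
/-- A function `v : ℝ² → ℝ` is harmonic on an open set `U` if it is twice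
continuously differentiable on `U` and its second partial derivatives in the two
coordinate directions sum to zero at every point of `U`. -/
def HarmonicOn2D (v : ℝ × ℝ → ℝ) (U : Set (ℝ × ℝ)) : Prop :=
  ContDiffOn ℝ 2 v U ∧
    ∀ p ∈ U,
      deriv (fun x => deriv (fun x' => v (x', p.2)) x) p.1
        + deriv (fun y => deriv (fun y' => v (p.1, y')) y) p.2 = 0


/-! On each edge `v` is affine and vanishes at both endpoints, so `v = 0` on the frontier, and
the weak maximum principle applied to `v` and `-v` gives `v = 0` on the closure. For the maximum
principle: when `ε > 0`, the function `v + ε (x² + y²)` has Laplacian `4ε > 0` in `U`, while the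
one-variable second-derivative test along both coordinate slices would make it `≤ 0` at an interior
maximum. Hence its maximum over the compact closure is attained on the frontier, so
`v ≤ ε · sup (x² + y²)` on the closure; now let `ε → 0`. -/

open Filter Set Topology

lemma deriv_deriv_nonpos_of_isLocalMax {f : ℝ → ℝ} {a : ℝ} (hmax : IsLocalMax f a)
    (hc : ContinuousAt f a) : deriv (deriv f) a ≤ 0 := by
  by_contra! hpos
  -- The second-derivative test makes `a` also a local minimum, so `f` is locally constant.
  have hmin : IsLocalMin f a := isLocalMin_of_deriv_deriv_pos hpos hmax.deriv_eq_zero hc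
  have hconst : f =ᶠ[𝓝 a] fun _ => f a := by
    filter_upwards [hmax, hmin] with x hxmax hxmin using le_antisymm hxmax hxmin
  have hderiv : deriv f =ᶠ[𝓝 a] fun _ => 0 := by
    simpa using hconst.deriv
  simp [hderiv.deriv_eq] at hpos

lemma deriv_deriv_add_const_mul_sq {f : ℝ → ℝ} {a : ℝ} (hf : ContDiffAt ℝ 2 f a) (ε : ℝ) :
    deriv (deriv fun x => f x + ε * x ^ 2) a = deriv (deriv f) a + 2 * ε := by
  have hsq (x : ℝ) : HasDerivAt (fun x => ε * x ^ 2) (2 * ε * x) x := by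
    simpa [mul_comm, mul_left_comm] using (hasDerivAt_pow 2 x).const_mul ε
  have hderiv : deriv (fun x => f x + ε * x ^ 2) =ᶠ[𝓝 a] fun x => deriv f x + 2 * ε * x := by
    filter_upwards [hf.eventually (by simp)] with x hx
    rw [deriv_fun_add (hx.differentiableAt (by simp)) (hsq x).differentiableAt, (hsq x).deriv]
  have hf' : DifferentiableAt ℝ (deriv f) a :=
    (hf.derivWithin (m := 1) (by norm_num)).differentiableAt (by simp)
  rw [hderiv.deriv_eq, deriv_fun_add hf' (by fun_prop)]
  simp

lemma deriv_deriv_add_two_mul_nonpos_of_isLocalMax {f : ℝ → ℝ} {a ε : ℝ}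
    (hf : ContDiffAt ℝ 2 f a) (hmax : IsLocalMax (fun x => f x + ε * x ^ 2) a) :
    deriv (deriv f) a + 2 * ε ≤ 0 := by
  rw [← deriv_deriv_add_const_mul_sq hf]
  exact deriv_deriv_nonpos_of_isLocalMax hmax (by fun_prop)

namespace HarmonicOn2D

variable {v : ℝ × ℝ → ℝ} {U : Set (ℝ × ℝ)}

lemma neg (hv : HarmonicOn2D v U) : HarmonicOn2D (fun p => -v p) U := by
  refine ⟨hv.1.neg, fun p hp => ?_⟩
  simp only [deriv.fun_neg]
  linarith [hv.2 p hp]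

lemma not_isLocalMax_add_sq (hv : HarmonicOn2D v U) (hU : IsOpen U) {m : ℝ × ℝ} (hm : m ∈ U)
    {ε : ℝ} (hε : 0 < ε) : ¬ IsLocalMax (fun q : ℝ × ℝ => v q + ε * (q.1 ^ 2 + q.2 ^ 2)) m := by
  intro hmax
  obtain ⟨x, y⟩ := m
  have hC2 : ContDiffAt ℝ 2 v (x, y) := hv.1.contDiffAt (hU.mem_nhds hm)
  have hxx : deriv (deriv fun x' => v (x', y)) x + 2 * ε ≤ 0 := by
    refine deriv_deriv_add_two_mul_nonpos_of_isLocalMax (hC2.comp x (by fun_prop)) ?_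
    filter_upwards [hmax.comp_continuous (g := fun x' => (x', y)) (by fun_prop)] with x' hx'
    simp only [Function.comp_apply] at hx'
    linarith
  have hyy : deriv (deriv fun y' => v (x, y')) y + 2 * ε ≤ 0 := by
    refine deriv_deriv_add_two_mul_nonpos_of_isLocalMax (hC2.comp y (by fun_prop)) ?_
    filter_upwards [hmax.comp_continuous (g := fun y' => (x, y')) (by fun_prop)] with y' hy'
    simp only [Function.comp_apply] at hy'
    linarith
  linarith [hv.2 (x, y) hm]

lemma nonpos_of_nonpos_on_frontier (hv : HarmonicOn2D v U) (hUo : IsOpen U)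
    (hUb : Bornology.IsBounded U) (hcont : ContinuousOn v (closure U))
    (hfr : ∀ p ∈ frontier U, v p ≤ 0) : ∀ p ∈ closure U, v p ≤ 0 := by
  have hK : IsCompact (closure U) := hUb.isCompact_closure
  obtain ⟨B, hB⟩ := hK.bddAbove_image (f := fun q : ℝ × ℝ => q.1 ^ 2 + q.2 ^ 2)
    (by fun_prop)
  intro p hp
  have hbound : ∀ ε > 0, v p ≤ ε * B := by
    intro ε hε
    set w := fun q : ℝ × ℝ => v q + ε * (q.1 ^ 2 + q.2 ^ 2)
    obtain ⟨m, hmK, hmax⟩ :=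
      hK.exists_isMaxOn ⟨p, hp⟩ (hcont.add (by fun_prop) : ContinuousOn w _)
    have hmU : m ∉ U := fun hmU => hv.not_isLocalMax_add_sq hUo hmU hε
      (hmax.isLocalMax (mem_of_superset (hUo.mem_nhds hmU) subset_closure))
    have hmfr : m ∈ frontier U := by
      rw [hUo.frontier_eq]
      exact ⟨hmK, hmU⟩
    calc v p ≤ w p := by simp only [w]; nlinarith [sq_nonneg p.1, sq_nonneg p.2]
      _ ≤ w m := hmax hp
      _ ≤ ε * B := by
        simp only [w]
        nlinarith [hfr m hmfr, hB (mem_image_of_mem _ hmK)]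
  have hlim : Tendsto (fun ε : ℝ => ε * B) (𝓝[>] 0) (𝓝 0) := by
    simpa using tendsto_nhdsWithin_of_tendsto_nhds ((continuous_mul_const B).tendsto 0)
  exact ge_of_tendsto hlim (eventually_nhdsWithin_of_forall hbound)

lemma eq_zero_of_eq_zero_on_frontier (hv : HarmonicOn2D v U) (hUo : IsOpen U)
    (hUb : Bornology.IsBounded U) (hcont : ContinuousOn v (closure U))
    (hfr : ∀ p ∈ frontier U, v p = 0) : ∀ p ∈ closure U, v p = 0 := fun p hp =>
  le_antisymm (hv.nonpos_of_nonpos_on_frontier hUo hUb hcont (fun q hq => (hfr q hq).le) p hp)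
    (neg_nonpos.1 (hv.neg.nonpos_of_nonpos_on_frontier hUo hUb hcont.neg
      (fun q hq => by simp [hfr q hq]) p hp))

end HarmonicOn2D

lemma eq_zero_on_segment_of_eq_affine {v : ℝ × ℝ → ℝ} {a b g : ℝ × ℝ} {c : ℝ}
    (hv : ∀ p ∈ segment ℝ a b, v p = g.1 * p.1 + g.2 * p.2 + c) (ha : v a = 0) (hb : v b = 0) :
    ∀ p ∈ segment ℝ a b, v p = 0 := by
  rw [hv a (left_mem_segment ℝ a b)] at ha
  rw [hv b (right_mem_segment ℝ a b)] at hb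
  rintro p hp
  rw [hv p hp]
  obtain ⟨s, t, -, -, hst, rfl⟩ := hp
  simp only [Prod.fst_add, Prod.snd_add, Prod.smul_fst, Prod.smul_snd, smul_eq_mul]
  linear_combination s * ha + t * hb - c * hst

/-- unisolvence of the vertex degrees of freedom for the low-order
virtual element space.  If `U ⊆ ℝ²` is a bounded open set whose frontier is the union
of the closed segments `[Vᵢ, V_{i+1}]` (indices mod `n`), and `v` is continuous on the
closure of `U`, harmonic on `U`, affine on each boundary segment, and vanishes at all
vertices, then `v = 0` on the closure of `U`. -/
theorem vem_low_order_unisolvence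
    (n : ℕ) [NeZero n] (V : Fin n → ℝ × ℝ)
    (U : Set (ℝ × ℝ)) (hUo : IsOpen U) (hUb : Bornology.IsBounded U)
    (hfr : frontier U = ⋃ i : Fin n, segment ℝ (V i) (V (i + 1)))
    (v : ℝ × ℝ → ℝ)
    (hcont : ContinuousOn v (closure U))
    (hharm : HarmonicOn2D v U)
    (hedge : ∀ i : Fin n, ∃ (g : ℝ × ℝ) (c : ℝ),
      ∀ p ∈ segment ℝ (V i) (V (i + 1)), v p = g.1 * p.1 + g.2 * p.2 + c)
    (hvert : ∀ i : Fin n, v (V i) = 0) :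
    ∀ p ∈ closure U, v p = 0 := by
  refine hharm.eq_zero_of_eq_zero_on_frontier hUo hUb hcont fun p hp => ?_
  rw [hfr, mem_iUnion] at hp
  obtain ⟨i, hpi⟩ := hp
  obtain ⟨g, c, hgc⟩ := hedge i
  exact eq_zero_on_segment_of_eq_affine hgc (hvert i) (hvert (i + 1)) p hpi
end

section
/- Abstract stability of the virtual element bilinear form: let E be a real inner product space, K a complete subspace of E, and Π the orthogonal projection of E onto K. Let c₀, c₁ > 0 and let S : E × E → ℝ be a bilinear form satisfying c₀ · ‖u − Πu‖² ≤ S(u − Πu, u − Πu) ≤ c₁ · ‖u − Πu‖² for all u ∈ E. Define a_h(u, v) := ⟪Πu, Πv⟫ + S(u − Πu, v − Πv). Then for every u ∈ E, min(1, c₀) · ‖u‖² ≤ a_h(u, u) ≤ max(1, c₁) · ‖u‖². (This is the VEM stability property: any stabilizing bilinear form that behaves like the exact energy on the kernel of the projection yields a discrete bilinear form uniformly equivalent to the exact one, with constants α_* = min(1, c₀) and α* = max(1, c₁).) -/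
open RealInnerProductSpace

/-! Pythagoras splits `‖u‖²` into `‖Πu‖² + ‖u - Πu‖²`, while `a_h(u,u)` is `‖Πu‖²` plus a
quantity trapped between `c₀ ‖u - Πu‖²` and `c₁ ‖u - Πu‖²`; comparing the two sums term by
term gives the constants `min 1 c₀` and `max 1 c₁`. -/

theorem Submodule.norm_sq_eq_norm_sq_orthogonalProjectionOnto_add_norm_sq_sub
    {E : Type*} [NormedAddCommGroup E] [InnerProductSpace ℝ E]
    (K : Submodule ℝ E) [K.HasOrthogonalProjection] (u : E) :
    ‖u‖ ^ 2 = ‖(K.orthogonalProjectionOnto u : E)‖ ^ 2 + ‖u - K.orthogonalProjectionOnto u‖ ^ 2 := by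
  simpa [Submodule.orthogonalProjectionOnto_orthogonal] using
    Submodule.norm_sq_eq_add_norm_sq_projection u K

theorem min_one_mul_add_le_add {p w s c : ℝ} (hp : 0 ≤ p) (hw : 0 ≤ w) (h : c * w ≤ s) :
    min 1 c * (p + w) ≤ p + s :=
  calc min 1 c * (p + w) = min 1 c * p + min 1 c * w := mul_add _ _ _
    _ ≤ p + c * w := add_le_add (mul_le_of_le_one_left hp (min_le_left _ _))
        (mul_le_mul_of_nonneg_right (min_le_right _ _) hw)
    _ ≤ p + s := add_le_add_right h p

theorem add_le_max_one_mul_add {p w s c : ℝ} (hp : 0 ≤ p) (hw : 0 ≤ w) (h : s ≤ c * w) :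
    p + s ≤ max 1 c * (p + w) :=
  calc p + s ≤ p + c * w := add_le_add_right h p
    _ ≤ max 1 c * p + max 1 c * w := add_le_add (le_mul_of_one_le_left hp (le_max_left _ _))
        (mul_le_mul_of_nonneg_right (le_max_right _ _) hw)
    _ = max 1 c * (p + w) := (mul_add _ _ _).symm

theorem vem_abstract_stability_general
    {E : Type*} [NormedAddCommGroup E] [InnerProductSpace ℝ E]
    (K : Submodule ℝ E) [CompleteSpace K]
    (c₀ c₁ : ℝ)
    (S : E →ₗ[ℝ] E →ₗ[ℝ] ℝ)
    (hS : ∀ u : E,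
      c₀ * ‖u - Submodule.orthogonalProjectionOnto K u‖ ^ 2
          ≤ S (u - Submodule.orthogonalProjectionOnto K u) (u - Submodule.orthogonalProjectionOnto K u) ∧
        S (u - Submodule.orthogonalProjectionOnto K u) (u - Submodule.orthogonalProjectionOnto K u)
          ≤ c₁ * ‖u - Submodule.orthogonalProjectionOnto K u‖ ^ 2) :
    ∀ u : E,
      min 1 c₀ * ‖u‖ ^ 2
          ≤ ⟪(Submodule.orthogonalProjectionOnto K u : E), (Submodule.orthogonalProjectionOnto K u : E)⟫
            + S (u - Submodule.orthogonalProjectionOnto K u) (u - Submodule.orthogonalProjectionOnto K u) ∧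
        ⟪(Submodule.orthogonalProjectionOnto K u : E), (Submodule.orthogonalProjectionOnto K u : E)⟫
            + S (u - Submodule.orthogonalProjectionOnto K u) (u - Submodule.orthogonalProjectionOnto K u)
          ≤ max 1 c₁ * ‖u‖ ^ 2 := by
  intro u
  obtain ⟨hlower, hupper⟩ := hS u
  rw [real_inner_self_eq_norm_sq,
    K.norm_sq_eq_norm_sq_orthogonalProjectionOnto_add_norm_sq_sub u]
  exact ⟨min_one_mul_add_le_add (sq_nonneg _) (sq_nonneg _) hlower,
    add_le_max_one_mul_add (sq_nonneg _) (sq_nonneg _) hupper⟩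

/-- abstract stability of the virtual element bilinear form.  With `Π`
the orthogonal projection onto a complete subspace `K` and `S` a bilinear form whose
diagonal is equivalent to the squared norm on the range of `I − Π` (with constants
`c₀, c₁ > 0`), the discrete form `a_h(u,v) = ⟪Πu, Πv⟫ + S(u−Πu, v−Πv)` satisfies
`min(1, c₀) ‖u‖² ≤ a_h(u,u) ≤ max(1, c₁) ‖u‖²`. -/
theorem vem_abstract_stability
    {E : Type*} [NormedAddCommGroup E] [InnerProductSpace ℝ E]
    (K : Submodule ℝ E) [CompleteSpace K]
    (c₀ c₁ : ℝ) (hc₀ : 0 < c₀) (hc₁ : 0 < c₁)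
    (S : E →ₗ[ℝ] E →ₗ[ℝ] ℝ)
    (hS : ∀ u : E,
      c₀ * ‖u - Submodule.orthogonalProjectionOnto K u‖ ^ 2
          ≤ S (u - Submodule.orthogonalProjectionOnto K u) (u - Submodule.orthogonalProjectionOnto K u) ∧
        S (u - Submodule.orthogonalProjectionOnto K u) (u - Submodule.orthogonalProjectionOnto K u)
          ≤ c₁ * ‖u - Submodule.orthogonalProjectionOnto K u‖ ^ 2) :
    ∀ u : E,
      min 1 c₀ * ‖u‖ ^ 2
          ≤ ⟪(Submodule.orthogonalProjectionOnto K u : E), (Submodule.orthogonalProjectionOnto K u : E)⟫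
            + S (u - Submodule.orthogonalProjectionOnto K u) (u - Submodule.orthogonalProjectionOnto K u) ∧
        ⟪(Submodule.orthogonalProjectionOnto K u : E), (Submodule.orthogonalProjectionOnto K u : E)⟫
            + S (u - Submodule.orthogonalProjectionOnto K u) (u - Submodule.orthogonalProjectionOnto K u)
          ≤ max 1 c₁ * ‖u‖ ^ 2 :=
  vem_abstract_stability_general K c₀ c₁ S hS
end
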